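/- Let F ∈ ℕ, η > 0, L > 0, and let G = (V, E) be a directed graph on a finite vertex set with adversarial set A ⊆ V and regular set R = V ∖ A. Suppose one of the following two conditions holds: (a) |A| ≤ F, the adversaries are malicious (broadcast model), and G is (F+1, F+1)-robust, with the regular nodes running the LF dynamics with parameter F in the malicious model; or (b) A is F-local, the adversaries are Byzantine, and G is (2F+1)-robust, with the regular nodes running the LF dynamics with parameter F in the Byzantine model. For each i ∈ R let f_i : ℝ → ℝ be convex and continuous with all subgradients bounded in magnitude by L, whose set of global minimizers M_i is nonempty and bounded. Define M̄ = max_{i∈R} max M_i and M̲ = min_{i∈R} min M_i. If the weights are lower bounded by η and the nonnegative step-sizes satisfy ∑_t α_t = ∞ and α_t → 0, then for every i ∈ R, limsup_{t→∞} x_i(t) ≤ M̄ and liminf_{t→∞} x_i(t) ≥ M̲, regardless of the actions of the adversarial nodes and the initial values. -/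

import Mathlib

open Filter
open scoped Classical

/-- The in-neighborhood of `v` in the directed graph with edge relation `E`
(`E u v` means there is an edge from `u` to `v`). -/
noncomputable def NIn {V : Type*} [Fintype V] (E : V → V → Prop) (v : V) : Finset V :=
  Finset.univ.filter (fun u => E u v)

/-- A set `S` is `r`-reachable if some vertex of `S` has at least `r` in-neighbors outside `S`. -/
def RReachable {V : Type*} [Fintype V] (E : V → V → Prop) (r : ℕ) (S : Finset V) : Prop :=
  ∃ v ∈ S, r ≤ ((NIn E v) \ S).card

/-- A directed graph is `r`-robust if for every pair of disjoint nonempty vertex subsets,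
at least one of them is `r`-reachable. -/
def RRobust {V : Type*} [Fintype V] (E : V → V → Prop) (r : ℕ) : Prop :=
  ∀ S₁ S₂ : Finset V, S₁.Nonempty → S₂.Nonempty → Disjoint S₁ S₂ →
    RReachable E r S₁ ∨ RReachable E r S₂

/-- A directed graph is `(r,s)`-robust if for every pair of disjoint nonempty vertex
subsets `S₁, S₂`, either every node of `S₁` has at least `r` in-neighbors outside `S₁`,
or every node of `S₂` has at least `r` in-neighbors outside `S₂`, or at least `s` nodes
of `S₁ ∪ S₂` have at least `r` in-neighbors outside their respective sets. -/
def RSRobust {V : Type*} [Fintype V] (E : V → V → Prop) (r s : ℕ) : Prop :=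
  ∀ S₁ S₂ : Finset V, S₁.Nonempty → S₂.Nonempty → Disjoint S₁ S₂ →
    (∀ v ∈ S₁, r ≤ ((NIn E v) \ S₁).card) ∨
    (∀ v ∈ S₂, r ≤ ((NIn E v) \ S₂).card) ∨
    s ≤ ((S₁.filter (fun v => r ≤ ((NIn E v) \ S₁).card)) ∪
         (S₂.filter (fun v => r ≤ ((NIn E v) \ S₂).card))).card

/-- `d` is a subgradient of `f` at `x`. -/
def IsSubgradient (f : ℝ → ℝ) (x d : ℝ) : Prop :=
  ∀ y, f x + d * (y - x) ≤ f y

/-- All subgradients of `f` are bounded in magnitude by `L`. -/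
def HasBoundedSubgradients (f : ℝ → ℝ) (L : ℝ) : Prop :=
  ∀ x d, IsSubgradient f x d → |d| ≤ L

/-- `J` is an admissible LF-retained set with parameter `F` for the values `ξ` on the
in-neighborhood `N`, relative to the node's own value `xi`:  `J = N \ (H ∪ L)` where `H`
consists of (at most) the `F` largest received values strictly greater than `xi` (all of
them if there are fewer than `F`), and symmetrically `L` consists of (at most) the `F`
smallest received values strictly less than `xi`. -/
def IsLFRetained {ι : Type*} [DecidableEq ι] (F : ℕ) (N : Finset ι) (ξ : ι → ℝ)
    (xi : ℝ) (J : Finset ι) : Prop :=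
  ∃ H L : Finset ι,
    J = N \ (H ∪ L) ∧
    H ⊆ N.filter (fun j => xi < ξ j) ∧
    (∀ j ∈ H, ∀ k ∈ (N.filter (fun j => xi < ξ j)) \ H, ξ k ≤ ξ j) ∧
    ((N.filter (fun j => xi < ξ j)).card ≤ F → H = N.filter (fun j => xi < ξ j)) ∧
    (F < (N.filter (fun j => xi < ξ j)).card → H.card = F) ∧
    L ⊆ N.filter (fun j => ξ j < xi) ∧
    (∀ j ∈ L, ∀ k ∈ (N.filter (fun j => ξ j < xi)) \ L, ξ j ≤ ξ k) ∧
    ((N.filter (fun j => ξ j < xi)).card ≤ F → L = N.filter (fun j => ξ j < xi)) ∧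
    (F < (N.filter (fun j => ξ j < xi)).card → L.card = F)

/-- The LF dynamics with parameter `F` in the malicious (broadcast) model: at each
time-step, each regular node `i ∈ R` filters the values of its in-neighbors (the same
broadcast values `x t j` for all receivers), forms a convex combination of its own value
and the retained values with weights lower bounded by `η`, and takes a subgradient step
of its local function `f i` with step-size `α t`. -/
def LFMalicious {V : Type*} [Fintype V] [DecidableEq V] (E : V → V → Prop) (F : ℕ)
    (η : ℝ) (R : Finset V) (f : V → ℝ → ℝ) (α : ℕ → ℝ) (x : ℕ → V → ℝ) : Prop :=
  ∀ t : ℕ, ∀ i ∈ R, ∃ (J : Finset V) (a : V → ℝ) (d : ℝ),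
    IsLFRetained F (NIn E i) (x t) (x t i) J ∧
    (∀ j ∈ insert i J, η ≤ a j) ∧
    a i + ∑ j ∈ J, a j = 1 ∧
    IsSubgradient (f i) (a i * x t i + ∑ j ∈ J, a j * x t j) d ∧
    x (t + 1) i = (a i * x t i + ∑ j ∈ J, a j * x t j) - α t * d

/-- The LF dynamics with parameter `F` in the Byzantine model: `χ t i j` is the value
received by node `i` from its in-neighbor `j` at time `t` (equal to the true state
`x t j` whenever `j` is regular, arbitrary otherwise); each regular node filters the
received values, forms a convex combination with weights lower bounded by `η`, and takes
a subgradient step of its local function. -/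
def LFByzantine {V : Type*} [Fintype V] [DecidableEq V] (E : V → V → Prop) (F : ℕ)
    (η : ℝ) (R : Finset V) (f : V → ℝ → ℝ) (α : ℕ → ℝ) (x : ℕ → V → ℝ)
    (χ : ℕ → V → V → ℝ) : Prop :=
  (∀ t : ℕ, ∀ i ∈ R, ∀ j ∈ R, χ t i j = x t j) ∧
  ∀ t : ℕ, ∀ i ∈ R, ∃ (J : Finset V) (a : V → ℝ) (d : ℝ),
    IsLFRetained F (NIn E i) (χ t i) (x t i) J ∧
    (∀ j ∈ insert i J, η ≤ a j) ∧
    a i + ∑ j ∈ J, a j = 1 ∧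
    IsSubgradient (f i) (a i * x t i + ∑ j ∈ J, a j * χ t i j) d ∧
    x (t + 1) i = (a i * x t i + ∑ j ∈ J, a j * χ t i j) - α t * d

/-- The set of global minimizers of `f : ℝ → ℝ`. -/
def MinSet (f : ℝ → ℝ) : Set ℝ := {x | ∀ y, f x ≤ f y}

/-!
If at most `F` in-neighbours of a regular node are adversarial, every value that survives the
LF filter lies in the range of the current regular states: a retained value above that range
would have `F` discarded values above it, giving `F + 1` adversarial values. So each regular node
takes a subgradient step from a point `z` of that range. When `z` lies `ε / 2` above all regular
minimisers, convexity bounds the subgradients at `z` below by a uniform `δ > 0`, and the maximal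
regular state drops by at least `α t * δ`; otherwise the step overshoots by at most
`α t * L → 0`. As `∑ α t = ∞`, the maximal regular state eventually stays below `M̄ + ε`. The
lower bound is the same argument for `u ↦ f_i (-u)`.
-/

open Finset

theorem eventually_le_of_eventually_le_max_sub {M β : ℕ → ℝ} {c : ℝ} (hβ : ∀ t, 0 ≤ β t)
    (hdiv : Tendsto (fun n => ∑ t ∈ range n, β t) atTop atTop)
    (hrec : ∀ᶠ t in atTop, M (t + 1) ≤ max c (M t - β t)) :
    ∀ᶠ t in atTop, M t ≤ c := by
  obtain ⟨T, hT⟩ := eventually_atTop.1 hrec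
  have hreach : ∃ t ≥ T, M t ≤ c := by
    by_contra! habove
    -- `M t + ∑_{s < t} β s` does not increase while `M t` stays above `c`
    have hmono : ∀ t ≥ T, M t + ∑ s ∈ range t, β s ≤ M T + ∑ s ∈ range T, β s := by
      intro t ht
      induction t, ht using Nat.le_induction with
      | base => rfl
      | succ t ht ih =>
        have hdesc : M (t + 1) ≤ M t - β t :=
          (le_max_iff.1 (hT t ht)).resolve_left (not_le.2 (habove (t + 1) (by omega)))
        rw [sum_range_succ]
        linarith
    obtain ⟨t, hsum, htT⟩ :=
      ((hdiv.eventually_ge_atTop (M T + ∑ s ∈ range T, β s - c)).and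
        (eventually_ge_atTop T)).exists
    linarith [hmono t htT, habove t htT]
  obtain ⟨t₀, ht₀T, ht₀⟩ := hreach
  filter_upwards [eventually_ge_atTop t₀] with t ht
  induction t, ht using Nat.le_induction with
  | base => exact ht₀
  | succ t ht ih =>
    exact (hT t (ht₀T.trans ht)).trans (max_le le_rfl (by linarith [hβ t]))

theorem limsup_le_and_le_liminf_of_eventually_mem_Icc {ι : Type*} {l : Filter ι} [l.NeBot]
    {u : ι → ℝ} {m M : ℝ} (h : ∀ ε > 0, ∀ᶠ t in l, u t ∈ Set.Icc (m - ε) (M + ε)) :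
    limsup u l ≤ M ∧ m ≤ liminf u l := by
  have hcobddAbove : IsCoboundedUnder (· ≤ ·) l u :=
    isCoboundedUnder_le_of_eventually_le l ((h 1 one_pos).mono fun _ ht => ht.1)
  have hcobddBelow : IsCoboundedUnder (· ≥ ·) l u :=
    isCoboundedUnder_ge_of_eventually_le l ((h 1 one_pos).mono fun _ ht => ht.2)
  refine ⟨le_of_forall_pos_le_add fun ε hε => ?_, le_of_forall_pos_le_add fun ε hε => ?_⟩
  · exact limsup_le_of_le hcobddAbove ((h ε hε).mono fun _ ht => ht.2)
  · rw [← sub_le_iff_le_add]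
    exact le_liminf_of_le hcobddBelow ((h ε hε).mono fun _ ht => ht.1)

namespace IsLFRetained

variable {ι : Type*} [DecidableEq ι] {F : ℕ} {N J : Finset ι} {ξ : ι → ℝ} {xi : ℝ}

theorem neg (hJ : IsLFRetained F N ξ xi J) : IsLFRetained F N (fun j => -ξ j) (-xi) J := by
  obtain ⟨H, L, rfl, hH, hHmax, hHall, hHcard, hL, hLmin, hLall, hLcard⟩ := hJ
  have hgt : N.filter (fun j => -xi < -ξ j) = N.filter (fun j => ξ j < xi) := by simp
  have hlt : N.filter (fun j => -ξ j < -xi) = N.filter (fun j => xi < ξ j) := by simp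
  refine ⟨L, H, by rw [union_comm], ?_, ?_, ?_, ?_, ?_, ?_, ?_, ?_⟩ <;>
    simp only [hgt, hlt, neg_le_neg_iff]
  exacts [hL, hLmin, hLall, hLcard, hH, hHmax, hHall, hHcard]

theorem le_of_card_filter_lt_le (hJ : IsLFRetained F N ξ xi J) {M : ℝ}
    (hM : (N.filter (fun j => M < ξ j)).card ≤ F) (hxi : xi ≤ M) : ∀ j ∈ J, ξ j ≤ M := by
  obtain ⟨H, L, rfl, hH, hHmax, hHall, hHcard, -⟩ := hJ
  intro j hj
  by_contra! hjM
  obtain ⟨hjN, hjHL⟩ := mem_sdiff.1 hj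
  have hjH : j ∉ H := fun h => hjHL (mem_union_left _ h)
  have hjP : j ∈ N.filter (fun k => xi < ξ k) := mem_filter.2 ⟨hjN, hxi.trans_lt hjM⟩
  rcases le_or_gt (N.filter (fun k => xi < ξ k)).card F with hle | hlt
  · exact hjH (hHall hle ▸ hjP)
  -- the `F` discarded values are all at least `ξ j > M`, so with `j` there are `F + 1` of them
  have hsub : insert j H ⊆ N.filter (fun k => M < ξ k) := by
    intro k hk
    rcases mem_insert.1 hk with rfl | hkH
    · exact mem_filter.2 ⟨hjN, hjM⟩
    · exact mem_filter.2 ⟨(mem_filter.1 (hH hkH)).1,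
        hjM.trans_le (hHmax k hkH j (mem_sdiff.2 ⟨hjP, hjH⟩))⟩
  have := card_le_card hsub
  rw [card_insert_of_notMem hjH, hHcard hlt] at this
  omega

theorem ge_of_card_filter_lt_le (hJ : IsLFRetained F N ξ xi J) {m : ℝ}
    (hm : (N.filter (fun j => ξ j < m)).card ≤ F) (hxi : m ≤ xi) : ∀ j ∈ J, m ≤ ξ j := by
  have := hJ.neg.le_of_card_filter_lt_le (M := -m) (by simpa using hm) (neg_le_neg hxi)
  simpa using this

end IsLFRetained

section WeightedAverage

variable {ι : Type*} [DecidableEq ι] {J : Finset ι} {i : ι} {a ξ : ι → ℝ} {xi : ℝ}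

theorem weighted_avg_le {M : ℝ} (ha : ∀ j ∈ insert i J, 0 ≤ a j)
    (hsum : a i + ∑ j ∈ J, a j = 1) (hxi : xi ≤ M) (hξ : ∀ j ∈ J, ξ j ≤ M) :
    a i * xi + ∑ j ∈ J, a j * ξ j ≤ M :=
  calc a i * xi + ∑ j ∈ J, a j * ξ j
      ≤ a i * M + ∑ j ∈ J, a j * M :=
        add_le_add (mul_le_mul_of_nonneg_left hxi (ha i (mem_insert_self i J)))
          (sum_le_sum fun j hj =>
            mul_le_mul_of_nonneg_left (hξ j hj) (ha j (mem_insert_of_mem hj)))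
    _ = M := by rw [← sum_mul, ← add_mul, hsum, one_mul]

theorem le_weighted_avg {m : ℝ} (ha : ∀ j ∈ insert i J, 0 ≤ a j)
    (hsum : a i + ∑ j ∈ J, a j = 1) (hxi : m ≤ xi) (hξ : ∀ j ∈ J, m ≤ ξ j) :
    m ≤ a i * xi + ∑ j ∈ J, a j * ξ j := by
  have := weighted_avg_le (ξ := fun j => -ξ j) ha hsum (neg_le_neg hxi)
    fun j hj => neg_le_neg (hξ j hj)
  simpa only [mul_neg, sum_neg_distrib, ← neg_add, neg_le_neg_iff] using this

end WeightedAverage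

def HullSubgradientSteps {V : Type*} (R : Finset V) (f : V → ℝ → ℝ) (α : ℕ → ℝ)
    (x : ℕ → V → ℝ) : Prop :=
  ∀ t, ∀ i ∈ R, ∃ z d, (∃ j ∈ R, x t j ≤ z) ∧ (∃ k ∈ R, z ≤ x t k) ∧
    IsSubgradient (f i) z d ∧ x (t + 1) i = z - α t * d

section LFDynamics

variable {V : Type*} [DecidableEq V] {F : ℕ} {A : Finset V}

theorem card_filter_le_of_forall_notMem {N : Finset V} {ξ : V → ℝ} {p : ℝ → Prop}
    [DecidablePred p] (hA : (N ∩ A).card ≤ F) (hreg : ∀ v ∈ N, v ∉ A → ¬ p (ξ v)) :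
    (N.filter (fun v => p (ξ v))).card ≤ F := by
  refine (card_le_card fun v hv => ?_).trans hA
  obtain ⟨hvN, hv⟩ := mem_filter.1 hv
  exact mem_inter.2 ⟨hvN, by_contra fun hvA => hreg v hvN hvA hv⟩

variable [Fintype V]

theorem IsLFRetained.weighted_avg_mem_regular_range {N J : Finset V} {ξ a y : V → ℝ} {i : V}
    (hi : i ∉ A) (hJ : IsLFRetained F N ξ (y i) J) (hA : (N ∩ A).card ≤ F)
    (hξ : ∀ v ∈ N, v ∉ A → ξ v = y v) (ha : ∀ j ∈ insert i J, 0 ≤ a j)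
    (hsum : a i + ∑ j ∈ J, a j = 1) :
    (∃ j ∈ Aᶜ, y j ≤ a i * y i + ∑ j ∈ J, a j * ξ j) ∧
      ∃ k ∈ Aᶜ, a i * y i + ∑ j ∈ J, a j * ξ j ≤ y k := by
  obtain ⟨j, hj, hmin⟩ := Aᶜ.exists_min_image y ⟨i, mem_compl.2 hi⟩
  obtain ⟨k, hk, hmax⟩ := Aᶜ.exists_max_image y ⟨i, mem_compl.2 hi⟩
  have hlow := card_filter_le_of_forall_notMem (p := (· < y j)) hA fun v hvN hvA =>
    (hξ v hvN hvA).symm ▸ not_lt.2 (hmin v (mem_compl.2 hvA))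
  have hhigh := card_filter_le_of_forall_notMem (p := (y k < ·)) hA fun v hvN hvA =>
    (hξ v hvN hvA).symm ▸ not_lt.2 (hmax v (mem_compl.2 hvA))
  have hlo := hmin i (mem_compl.2 hi)
  have hhi := hmax i (mem_compl.2 hi)
  exact ⟨⟨j, hj, le_weighted_avg ha hsum hlo (hJ.ge_of_card_filter_lt_le hlow hlo)⟩,
    k, hk, weighted_avg_le ha hsum hhi (hJ.le_of_card_filter_lt_le hhigh hhi)⟩

variable {E : V → V → Prop} {η : ℝ} {f : V → ℝ → ℝ} {α : ℕ → ℝ} {x : ℕ → V → ℝ}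

theorem LFMalicious.hullSubgradientSteps (hLF : LFMalicious E F η Aᶜ f α x) (hη : 0 ≤ η)
    (hA : A.card ≤ F) : HullSubgradientSteps Aᶜ f α x := by
  intro t i hi
  obtain ⟨J, a, d, hJ, ha, hsum, hd, hx⟩ := hLF t i hi
  obtain ⟨hlow, hhigh⟩ := hJ.weighted_avg_mem_regular_range (mem_compl.1 hi)
    ((card_le_card inter_subset_right).trans hA) (fun _ _ _ => rfl)
    (fun j hj => hη.trans (ha j hj)) hsum
  exact ⟨_, d, hlow, hhigh, hd, hx⟩

theorem LFByzantine.hullSubgradientSteps {χ : ℕ → V → V → ℝ}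
    (hLF : LFByzantine E F η Aᶜ f α x χ) (hη : 0 ≤ η)
    (hA : ∀ v ∉ A, ((NIn E v) ∩ A).card ≤ F) : HullSubgradientSteps Aᶜ f α x := by
  intro t i hi
  obtain ⟨J, a, d, hJ, ha, hsum, hd, hx⟩ := hLF.2 t i hi
  obtain ⟨hlow, hhigh⟩ := hJ.weighted_avg_mem_regular_range (mem_compl.1 hi)
    (hA i (mem_compl.1 hi)) (fun v _ hv => hLF.1 t i hi v (mem_compl.2 hv))
    (fun j hj => hη.trans (ha j hj)) hsum
  exact ⟨_, d, hlow, hhigh, hd, hx⟩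

end LFDynamics

section Reflection

variable {f : ℝ → ℝ}

theorem ConvexOn.comp_neg (hf : ConvexOn ℝ Set.univ f) :
    ConvexOn ℝ Set.univ (fun u => f (-u)) :=
  hf.comp_linearMap (-LinearMap.id)

theorem IsSubgradient.comp_neg {z d : ℝ} (h : IsSubgradient f z d) :
    IsSubgradient (fun u => f (-u)) (-z) (-d) := fun y => by
  have := h (-y)
  simp only [neg_neg]
  linarith

theorem HasBoundedSubgradients.comp_neg {L : ℝ} (h : HasBoundedSubgradients f L) :
    HasBoundedSubgradients (fun u => f (-u)) L := fun z d hd => by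
  have hd' : IsSubgradient f (-z) (-d) := by simpa using hd.comp_neg
  simpa using h _ _ hd'

theorem mem_minSet_comp_neg {u : ℝ} : u ∈ MinSet (fun u => f (-u)) ↔ -u ∈ MinSet f :=
  ⟨fun h y => by simpa using h (-y), fun h y => h (-y)⟩

end Reflection

theorem ConvexOn.slope_le_of_isSubgradient {g : ℝ → ℝ} (hg : ConvexOn ℝ Set.univ g)
    {μ z₀ z d : ℝ} (hμ : μ < z₀) (hz : z₀ ≤ z) (hd : IsSubgradient g z d) :
    (g z₀ - g μ) / (z₀ - μ) ≤ d := by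
  have hsec := hg.secant_mono (Set.mem_univ μ) (Set.mem_univ z₀) (Set.mem_univ z) hμ.ne'
    (hμ.trans_le hz).ne' hz
  refine hsec.trans ((div_le_iff₀ (by linarith)).2 ?_)
  linarith [hd μ]

theorem exists_pos_forall_le_isSubgradient {ι : Type*} {R : Finset ι} (hR : R.Nonempty)
    {g : ι → ℝ → ℝ} {c z₀ : ℝ} (hconv : ∀ i ∈ R, ConvexOn ℝ Set.univ (g i))
    (hmin : ∀ i ∈ R, (MinSet (g i)).Nonempty) (hc : ∀ i ∈ R, MinSet (g i) ⊆ Set.Iic c)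
    (hz₀ : c < z₀) :
    ∃ δ > 0, ∀ i ∈ R, ∀ z d, z₀ ≤ z → IsSubgradient (g i) z d → δ ≤ d := by
  choose! μ hμ using hmin
  have hμz₀ : ∀ i ∈ R, μ i < z₀ := fun i hi => (hc i hi (hμ i hi)).trans_lt hz₀
  have hgap : ∀ i ∈ R, g i (μ i) < g i z₀ := fun i hi => by
    by_contra! hle
    exact hz₀.not_ge (hc i hi fun y => hle.trans (hμ i hi y))
  refine ⟨R.inf' hR fun i => (g i z₀ - g i (μ i)) / (z₀ - μ i),
    (lt_inf'_iff hR).2 fun i hi => div_pos (sub_pos.2 (hgap i hi)) (sub_pos.2 (hμz₀ i hi)),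
    fun i hi z d hz hd => (inf'_le _ hi).trans ?_⟩
  exact (hconv i hi).slope_le_of_isSubgradient (hμz₀ i hi) hz hd

namespace HullSubgradientSteps

variable {ι : Type*} {R : Finset ι} {g : ι → ℝ → ℝ} {α : ℕ → ℝ} {y : ℕ → ι → ℝ} {L c ε : ℝ}

theorem neg (hsteps : HullSubgradientSteps R g α y) :
    HullSubgradientSteps R (fun i u => g i (-u)) α (fun t i => -y t i) := by
  intro t i hi
  obtain ⟨z, d, ⟨j, hj, hjz⟩, ⟨k, hk, hzk⟩, hd, hy⟩ := hsteps t i hi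
  exact ⟨-z, -d, ⟨k, hk, neg_le_neg hzk⟩, ⟨j, hj, neg_le_neg hjz⟩, hd.comp_neg, by
    show -y (t + 1) i = _
    rw [hy]; ring⟩

theorem eventually_le (hsteps : HullSubgradientSteps R g α y)
    (hconv : ∀ i ∈ R, ConvexOn ℝ Set.univ (g i)) (hbdd : ∀ i ∈ R, HasBoundedSubgradients (g i) L)
    (hmin : ∀ i ∈ R, (MinSet (g i)).Nonempty) (hc : ∀ i ∈ R, MinSet (g i) ⊆ Set.Iic c)
    (hα0 : ∀ t, 0 ≤ α t) (hαdiv : Tendsto (fun n => ∑ t ∈ range n, α t) atTop atTop)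
    (hαlim : Tendsto α atTop (nhds 0)) (hε : 0 < ε) :
    ∀ᶠ t in atTop, ∀ i ∈ R, y t i ≤ c + ε := by
  rcases R.eq_empty_or_nonempty with rfl | hR
  · simp
  obtain ⟨δ, hδ, hslope⟩ := exists_pos_forall_le_isSubgradient hR hconv hmin hc
    (lt_add_of_pos_right c (half_pos hε))
  have hsmall : ∀ᶠ t in atTop, α t * L ≤ ε / 2 := by
    have : Tendsto (fun t => α t * L) atTop (nhds 0) := by simpa using hαlim.mul_const L
    exact this.eventually (eventually_le_nhds (half_pos hε))
  have hrec : ∀ᶠ t in atTop,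
      R.sup' hR (y (t + 1)) ≤ max (c + ε) (R.sup' hR (y t) - α t * δ) := by
    filter_upwards [hsmall] with t ht
    refine sup'_le hR _ fun i hi => ?_
    obtain ⟨z, d, -, ⟨k, hk, hzk⟩, hd, hy⟩ := hsteps t i hi
    rw [hy]
    rcases le_total z (c + ε / 2) with hz | hz
    · have := mul_le_mul_of_nonneg_left ((neg_le_abs d).trans (hbdd i hi z d hd)) (hα0 t)
      exact le_max_of_le_left (by linarith)
    · have := mul_le_mul_of_nonneg_left (hslope i hi z d hz hd) (hα0 t)
      exact le_max_of_le_right (by linarith [le_sup' (y t) hk])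
  have hdiv : Tendsto (fun n => ∑ t ∈ range n, α t * δ) atTop atTop := by
    simpa only [← sum_mul] using hαdiv.atTop_mul_const hδ
  filter_upwards [eventually_le_of_eventually_le_max_sub (M := fun t => R.sup' hR (y t))
    (fun t => mul_nonneg (hα0 t) hδ.le) hdiv hrec] with t ht i hi
  exact (le_sup' (y t) hi).trans ht

theorem eventually_ge (hsteps : HullSubgradientSteps R g α y)
    (hconv : ∀ i ∈ R, ConvexOn ℝ Set.univ (g i)) (hbdd : ∀ i ∈ R, HasBoundedSubgradients (g i) L)
    (hmin : ∀ i ∈ R, (MinSet (g i)).Nonempty) (hc : ∀ i ∈ R, MinSet (g i) ⊆ Set.Ici c)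
    (hα0 : ∀ t, 0 ≤ α t) (hαdiv : Tendsto (fun n => ∑ t ∈ range n, α t) atTop atTop)
    (hαlim : Tendsto α atTop (nhds 0)) (hε : 0 < ε) :
    ∀ᶠ t in atTop, ∀ i ∈ R, c - ε ≤ y t i := by
  have hneg := hsteps.neg.eventually_le (c := -c) (fun i hi => (hconv i hi).comp_neg)
    (fun i hi => (hbdd i hi).comp_neg)
    (fun i hi => let ⟨μ, hμ⟩ := hmin i hi; ⟨-μ, mem_minSet_comp_neg.2 (by rwa [neg_neg])⟩)
    (fun i hi _ hu => Set.mem_Iic.2 (le_neg.1 (hc i hi (mem_minSet_comp_neg.1 hu))))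
    hα0 hαdiv hαlim hε
  filter_upwards [hneg] with t ht i hi
  linarith [ht i hi]

end HullSubgradientSteps

theorem stmt17_general {V : Type*} [Fintype V] [DecidableEq V] (F : ℕ) (η L : ℝ)
    (hη : 0 < η) (E : V → V → Prop)
    (A : Finset V) (hR : (Aᶜ : Finset V).Nonempty)
    (f : V → ℝ → ℝ)
    (hconv : ∀ i ∈ (Aᶜ : Finset V), ConvexOn ℝ Set.univ (f i))
    (hbdd : ∀ i ∈ (Aᶜ : Finset V), HasBoundedSubgradients (f i) L)
    (hmin : ∀ i ∈ (Aᶜ : Finset V),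
      (MinSet (f i)).Nonempty ∧ BddAbove (MinSet (f i)) ∧ BddBelow (MinSet (f i)))
    (α : ℕ → ℝ) (hα0 : ∀ t, 0 ≤ α t)
    (hαdiv : Tendsto (fun T => ∑ t ∈ Finset.range T, α t) atTop atTop)
    (hαlim : Tendsto α atTop (nhds 0))
    (x : ℕ → V → ℝ)
    (hcase :
      (A.card ≤ F ∧ RSRobust E (F + 1) (F + 1) ∧ LFMalicious E F η Aᶜ f α x) ∨
      ((∀ v ∉ A, ((NIn E v) ∩ A).card ≤ F) ∧ RRobust E (2 * F + 1) ∧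
        ∃ χ : ℕ → V → V → ℝ, LFByzantine E F η Aᶜ f α x χ)) :
    ∀ i ∈ (Aᶜ : Finset V),
      Filter.limsup (fun t => x t i) atTop ≤
        (Aᶜ : Finset V).sup' hR (fun j => sSup (MinSet (f j))) ∧
      (Aᶜ : Finset V).inf' hR (fun j => sInf (MinSet (f j))) ≤
        Filter.liminf (fun t => x t i) atTop := by
  have hsteps : HullSubgradientSteps Aᶜ f α x := by
    rcases hcase with ⟨hA, -, hLF⟩ | ⟨hA, -, χ, hLF⟩
    · exact hLF.hullSubgradientSteps hη.le hA
    · exact hLF.hullSubgradientSteps hη.le hA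
  have hupper : ∀ i ∈ Aᶜ, MinSet (f i) ⊆ Set.Iic (Aᶜ.sup' hR fun j => sSup (MinSet (f j))) :=
    fun i hi _ hμ => (le_csSup (hmin i hi).2.1 hμ).trans (le_sup' (sSup <| MinSet <| f ·) hi)
  have hlower : ∀ i ∈ Aᶜ, MinSet (f i) ⊆ Set.Ici (Aᶜ.inf' hR fun j => sInf (MinSet (f j))) :=
    fun i hi _ hμ => (inf'_le (sInf <| MinSet <| f ·) hi).trans (csInf_le (hmin i hi).2.2 hμ)
  have hne : ∀ i ∈ Aᶜ, (MinSet (f i)).Nonempty := fun i hi => (hmin i hi).1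
  intro i hi
  refine limsup_le_and_le_liminf_of_eventually_mem_Icc fun ε hε => ?_
  filter_upwards [hsteps.eventually_ge hconv hbdd hne hlower hα0 hαdiv hαlim hε,
    hsteps.eventually_le hconv hbdd hne hupper hα0 hαdiv hαlim hε] with t hge hle
  exact ⟨hge i hi, hle i hi⟩

/-- Safety guarantee: under either (a) `F`-total malicious adversaries in an
`(F+1,F+1)`-robust network with the malicious-model LF dynamics, or (b) `F`-local
Byzantine adversaries in a `(2F+1)`-robust network with the Byzantine-model LF dynamics,
if every regular node's convex continuous function has subgradients bounded by `L` and a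
nonempty bounded set of minimizers, the weights are lower bounded by `η`, and the
nonnegative step-sizes satisfy `∑ α_t = ∞` and `α_t → 0`, then every regular state
asymptotically stays within the convex hull of the regular local minimizers:
`limsup x_i(t) ≤ M̄` and `liminf x_i(t) ≥ M̲`. -/
theorem stmt17 {V : Type*} [Fintype V] [DecidableEq V] (F : ℕ) (η L : ℝ)
    (hη : 0 < η) (hL : 0 < L) (E : V → V → Prop)
    (A : Finset V) (hR : (Aᶜ : Finset V).Nonempty)
    (f : V → ℝ → ℝ)
    (hconv : ∀ i ∈ (Aᶜ : Finset V), ConvexOn ℝ Set.univ (f i))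
    (hcont : ∀ i ∈ (Aᶜ : Finset V), Continuous (f i))
    (hbdd : ∀ i ∈ (Aᶜ : Finset V), HasBoundedSubgradients (f i) L)
    (hmin : ∀ i ∈ (Aᶜ : Finset V),
      (MinSet (f i)).Nonempty ∧ BddAbove (MinSet (f i)) ∧ BddBelow (MinSet (f i)))
    (α : ℕ → ℝ) (hα0 : ∀ t, 0 ≤ α t)
    (hαdiv : Tendsto (fun T => ∑ t ∈ Finset.range T, α t) atTop atTop)
    (hαlim : Tendsto α atTop (nhds 0))
    (x : ℕ → V → ℝ)
    (hcase :
      (A.card ≤ F ∧ RSRobust E (F + 1) (F + 1) ∧ LFMalicious E F η Aᶜ f α x) ∨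
      ((∀ v ∉ A, ((NIn E v) ∩ A).card ≤ F) ∧ RRobust E (2 * F + 1) ∧
        ∃ χ : ℕ → V → V → ℝ, LFByzantine E F η Aᶜ f α x χ)) :
    ∀ i ∈ (Aᶜ : Finset V),
      Filter.limsup (fun t => x t i) atTop ≤
        (Aᶜ : Finset V).sup' hR (fun j => sSup (MinSet (f j))) ∧
      (Aᶜ : Finset V).inf' hR (fun j => sInf (MinSet (f j))) ≤
        Filter.liminf (fun t => x t i) atTop :=
  stmt17_general F η L hη E A hR f hconv hbdd hmin α hα0 hαdiv hαlim x hcase
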